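/- Let I be a homogeneous ideal in S = k[x_0,...,x_r] and τ an elimination order for x_0. Then for every p, K_p(in_τ(I)) = in_{τ_0}(K_p(I)), i.e., taking partial elimination ideals commutes with taking initial ideals. -/

import Mathlib

open MvPolynomial

/-- A finite graded free resolution of a (homogeneous) ideal `I` in a polynomial ring. -/
structure GradedFreeRes {k : Type*} [Field k] {N : ℕ}
    (I : Ideal (MvPolynomial (Fin N) k)) where
  rk : ℕ → ℕ
  shift : (i : ℕ) → Fin (rk i) → ℕ
  len : ℕ
  rk_eq_zero : ∀ i, len < i → rk i = 0
  gen : Fin (rk 0) → MvPolynomial (Fin N) k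
  gen_hom : ∀ j, (gen j).IsHomogeneous (shift 0 j)
  mat : (i : ℕ) → Matrix (Fin (rk i)) (Fin (rk (i + 1))) (MvPolynomial (Fin N) k)
  mat_hom : ∀ i a b, mat i a b = 0 ∨
    (shift i a ≤ shift (i + 1) b ∧ (mat i a b).IsHomogeneous (shift (i + 1) b - shift i a))
  aug_surj : LinearMap.range
    (Fintype.linearCombination (MvPolynomial (Fin N) k) gen) = I
  aug_exact : LinearMap.range (mat 0).mulVecLin =
    LinearMap.ker
      (Fintype.linearCombination (MvPolynomial (Fin N) k) gen)
  complex_exact : ∀ i,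
    LinearMap.range (mat (i + 1)).mulVecLin = LinearMap.ker (mat i).mulVecLin

/-- The Castelnuovo–Mumford regularity of a homogeneous ideal, defined as the minimum over
all finite graded free resolutions of `I` of the maximum of `shift i j - i`. -/
noncomputable def cmReg {k : Type*} [Field k] {N : ℕ}
    (I : Ideal (MvPolynomial (Fin N) k)) : ℕ :=
  sInf { d | ∃ R : GradedFreeRes I, ∀ i, ∀ j : Fin (R.rk i), R.shift i j ≤ d + i }

/-- The leading exponent (degree) of a polynomial with respect to a monomial order. -/
noncomputable def ldeg {k : Type*} [Field k] {N : ℕ} (τ : MonomialOrder (Fin N))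
    (f : MvPolynomial (Fin N) k) : Fin N →₀ ℕ :=
  τ.toSyn.symm (f.support.sup fun m => τ.toSyn m)

/-- The initial ideal of `I` with respect to a monomial order `τ`. -/
noncomputable def initialIdeal {k : Type*} [Field k] {N : ℕ} (τ : MonomialOrder (Fin N))
    (I : Ideal (MvPolynomial (Fin N) k)) : Ideal (MvPolynomial (Fin N) k) :=
  Ideal.span { q | ∃ f ∈ I, f ≠ 0 ∧ q = monomial (ldeg τ f) (1 : k) }

/-- A homogeneous ideal: one containing all homogeneous components of its elements. -/
def IsHomogeneousIdeal {k : Type*} [Field k] {N : ℕ}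
    (I : Ideal (MvPolynomial (Fin N) k)) : Prop :=
  ∀ f ∈ I, ∀ d : ℕ, homogeneousComponent d f ∈ I

/-- The `p`-th partial elimination ideal (as a set): leading coefficients with respect to the
variable `x₀` of the elements of `I` of `x₀`-degree `p`, together with `0`. -/
noncomputable def pelimSet {k : Type*} [Field k] {N : ℕ}
    (I : Ideal (MvPolynomial (Fin (N + 1)) k)) (p : ℕ) :
    Set (MvPolynomial (Fin N) k) :=
  insert 0 { h | ∃ f ∈ I, f ≠ 0 ∧ (finSuccEquiv k N f).natDegree = p ∧
    (finSuccEquiv k N f).leadingCoeff = h }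

/-- An elimination order for the first variable: any monomial involving `x₀` is larger than
any monomial not involving `x₀`. -/
def IsElimOrder {N : ℕ} (τ : MonomialOrder (Fin (N + 1))) : Prop :=
  ∀ a b : Fin (N + 1) →₀ ℕ, a 0 = 0 → b 0 ≠ 0 → τ.toSyn a < τ.toSyn b

/-- `τ₀` is the restriction of `τ` to the last `N` variables. -/
def InducedOrder {N : ℕ} (τ : MonomialOrder (Fin (N + 1))) (τ₀ : MonomialOrder (Fin N)) : Prop :=
  ∀ a b : Fin N →₀ ℕ,
    τ₀.toSyn a ≤ τ₀.toSyn b ↔ τ.toSyn (a.mapDomain Fin.succ) ≤ τ.toSyn (b.mapDomain Fin.succ)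

/-- The linear change of coordinates on a polynomial ring given by a matrix. -/
noncomputable def coordChange {k : Type*} [Field k] {N : ℕ}
    (g : Matrix (Fin N) (Fin N) k) :
    MvPolynomial (Fin N) k →ₐ[k] MvPolynomial (Fin N) k :=
  aeval fun i => ∑ j, C (g i j) * X j

/-- `J` is the generic initial ideal of `I` with respect to `τ`: for every change of
coordinates `g` in a nonempty Zariski-open subset of `GL_N`, the initial ideal of `g · I`
is `J`. -/
noncomputable def IsGin {k : Type*} [Field k] {N : ℕ} (τ : MonomialOrder (Fin N))
    (I J : Ideal (MvPolynomial (Fin N) k)) : Prop :=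
  ∃ P : MvPolynomial (Fin N × Fin N) k, P ≠ 0 ∧
    ∀ g : Matrix (Fin N) (Fin N) k, IsUnit g.det →
      eval (fun q => g q.1 q.2) P ≠ 0 →
        initialIdeal τ (Ideal.map (coordChange g).toRingHom I) = J

/-! For an elimination order `τ` for `x₀` inducing `τ₀`, the leading monomial of a nonzero `f`
is `x₀ ^ p * in_{τ₀}(c)`, where `p` is the `x₀`-degree of `f` and `c` its leading coefficient
in `x₀`: monomials with a smaller power of `x₀` are smaller, and among those with `x₀ ^ p` the
order is `τ₀`. Both inclusions follow by comparing generators of the two monomial ideals;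
multiplying by a power of `x₀` moves a leading coefficient of lower `x₀`-degree into degree `p`. -/

theorem Finsupp.cons_add_cons {n : ℕ} {M : Type*} [AddZeroClass M] (a b : M)
    (s t : Fin n →₀ M) : cons a s + cons b t = cons (a + b) (s + t) := by
  ext j
  cases j using Fin.cases <;> simp

theorem Finsupp.cons_le_cons_iff {n : ℕ} {M : Type*} [Zero M] [Preorder M] {a b : M}
    {s t : Fin n →₀ M} : cons a s ≤ cons b t ↔ a ≤ b ∧ s ≤ t := by
  simp only [le_def, Fin.forall_fin_succ, cons_zero, cons_succ]

theorem Finsupp.cons_zero_eq_mapDomain_succ {n : ℕ} (m : Fin n →₀ ℕ) :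
    cons 0 m = m.mapDomain Fin.succ := by
  ext j
  cases j using Fin.cases with
  | zero => simp [mapDomain_of_notMem_range]
  | succ j => simp [mapDomain_apply (Fin.succ_injective n)]

theorem ldeg_eq_degree {k : Type*} [Field k] {N : ℕ} (τ : MonomialOrder (Fin N))
    (f : MvPolynomial (Fin N) k) : ldeg τ f = τ.degree f :=
  rfl

open Finsupp in
theorem IsElimOrder.toSyn_cons_lt_toSyn_cons {N : ℕ} {τ : MonomialOrder (Fin (N + 1))}
    (helim : IsElimOrder τ) {i j : ℕ} (hij : i < j) (m m' : Fin N →₀ ℕ) :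
    τ.toSyn (Finsupp.cons i m) < τ.toSyn (Finsupp.cons j m') := by
  have hlt : τ.toSyn (cons 0 m) < τ.toSyn (cons (j - i) m') :=
    helim _ _ (cons_zero _ _) (by rw [cons_zero]; omega)
  calc τ.toSyn (cons i m) = τ.toSyn (cons i 0) + τ.toSyn (cons 0 m) := by
        rw [← map_add, cons_add_cons, add_zero, zero_add]
    _ < τ.toSyn (cons i 0) + τ.toSyn (cons (j - i) m') := add_lt_add_right hlt _
    _ = τ.toSyn (cons j m') := by
        rw [← map_add, cons_add_cons, zero_add, Nat.add_sub_cancel' hij.le]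

theorem InducedOrder.toSyn_cons_le_toSyn_cons_iff {N : ℕ} {τ : MonomialOrder (Fin (N + 1))}
    {τ₀ : MonomialOrder (Fin N)} (hind : InducedOrder τ τ₀) (i : ℕ) (m m' : Fin N →₀ ℕ) :
    τ.toSyn (Finsupp.cons i m) ≤ τ.toSyn (Finsupp.cons i m') ↔ τ₀.toSyn m ≤ τ₀.toSyn m' := by
  have hsplit (m : Fin N →₀ ℕ) :
      τ.toSyn (Finsupp.cons i m) = τ.toSyn (Finsupp.cons i 0) + τ.toSyn (m.mapDomain Fin.succ) := by
    rw [← Finsupp.cons_zero_eq_mapDomain_succ, ← map_add, Finsupp.cons_add_cons, add_zero,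
      zero_add]
  rw [hsplit m, hsplit m', add_le_add_iff_left, hind]

open MvPolynomial in
theorem IsElimOrder.degree_eq_cons {R : Type*} [CommSemiring R] {N : ℕ}
    {τ : MonomialOrder (Fin (N + 1))} {τ₀ : MonomialOrder (Fin N)} (helim : IsElimOrder τ)
    (hind : InducedOrder τ τ₀) {f : MvPolynomial (Fin (N + 1)) R} (hf : f ≠ 0) :
    τ.degree f = Finsupp.cons (finSuccEquiv R N f).natDegree
      (τ₀.degree (finSuccEquiv R N f).leadingCoeff) := by
  set F := finSuccEquiv R N f
  have hF : F ≠ 0 := by simpa [F] using hf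
  have hmem : Finsupp.cons F.natDegree (τ₀.degree F.leadingCoeff) ∈ f.support :=
    mem_support_coeff_finSuccEquiv.1
      (τ₀.degree_mem_support (Polynomial.leadingCoeff_ne_zero.2 hF))
  refine τ.toSyn.injective (le_antisymm (τ.degree_le_iff.2 fun c hc => ?_) (τ.le_degree hmem))
  rw [← Finsupp.cons_tail c] at hc ⊢
  have htail := mem_support_coeff_finSuccEquiv.2 hc
  have hle : c 0 ≤ F.natDegree :=
    Polynomial.le_natDegree_of_ne_zero fun h => by simp [F, h] at htail
  rcases hle.lt_or_eq with hlt | heq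
  · exact (helim.toSyn_cons_lt_toSyn_cons hlt _ _).le
  · rw [heq] at htail ⊢
    exact (hind.toSyn_cons_le_toSyn_cons_iff _ _ _).2 (τ₀.le_degree htail)

namespace MvPolynomial

theorem finSuccEquiv_rename_succ {R : Type*} [CommSemiring R] {N : ℕ}
    (c : MvPolynomial (Fin N) R) : finSuccEquiv R N (rename Fin.succ c) = Polynomial.C c := by
  induction c using MvPolynomial.induction_on with
  | C a => simp [finSuccEquiv_apply]
  | add p q hp hq => simp [hp, hq]
  | mul_X p j hp => simp [hp, finSuccEquiv_X_succ]

theorem finSuccEquiv_monomial_cons {R : Type*} [CommSemiring R] {N : ℕ} (i : ℕ)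
    (m : Fin N →₀ ℕ) (c : R) :
    finSuccEquiv R N (monomial (Finsupp.cons i m) c) = Polynomial.monomial i (monomial m c) := by
  ext j m'
  simp only [finSuccEquiv_coeff_coeff, coeff_monomial, Polynomial.coeff_monomial]
  by_cases hij : i = j <;> simp [hij, Finsupp.cons_injective2.eq_iff]

end MvPolynomial

open MvPolynomial

section InitialIdeal

variable {k : Type*} [Field k] {N : ℕ}

theorem mem_initialIdeal_iff {τ : MonomialOrder (Fin N)} {I : Ideal (MvPolynomial (Fin N) k)}
    {q : MvPolynomial (Fin N) k} :
    q ∈ initialIdeal τ I ↔ ∀ m ∈ q.support, ∃ f ∈ I, f ≠ 0 ∧ τ.degree f ≤ m := by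
  have hspan : initialIdeal τ I =
      Ideal.span ((fun s => monomial s (1 : k)) '' (τ.degree '' {f | f ∈ I ∧ f ≠ 0})) := by
    rw [initialIdeal, Set.image_image]
    congr 1
    ext q
    simp [ldeg_eq_degree, eq_comm, and_assoc]
  simp [hspan, mem_ideal_span_monomial_image, and_assoc]

theorem monomial_degree_mem_initialIdeal (τ : MonomialOrder (Fin N))
    {I : Ideal (MvPolynomial (Fin N) k)} {f : MvPolynomial (Fin N) k} (hf : f ∈ I)
    (hf0 : f ≠ 0) : monomial (τ.degree f) 1 ∈ initialIdeal τ I :=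
  Ideal.subset_span ⟨f, hf, hf0, rfl⟩

end InitialIdeal

section PartialElimination

variable {k : Type*} [Field k] {N : ℕ}

theorem mem_pelimSet_iff {I : Ideal (MvPolynomial (Fin (N + 1)) k)} {p : ℕ}
    {h : MvPolynomial (Fin N) k} :
    h ∈ pelimSet I p ↔ ∃ f ∈ I, (finSuccEquiv k N f).natDegree ≤ p ∧
      (finSuccEquiv k N f).coeff p = h := by
  constructor
  · rintro (rfl | ⟨f, hf, -, hdeg, rfl⟩)
    · exact ⟨0, I.zero_mem, by simp, by simp⟩
    · exact ⟨f, hf, hdeg.le, by rw [← hdeg]; rfl⟩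
  · rintro ⟨f, hf, hdeg, rfl⟩
    by_cases h0 : (finSuccEquiv k N f).coeff p = 0
    · exact h0 ▸ Set.mem_insert _ _
    have hdeg' : (finSuccEquiv k N f).natDegree = p :=
      hdeg.antisymm (Polynomial.le_natDegree_of_ne_zero h0)
    refine Or.inr ⟨f, hf, fun hf0 => h0 (by simp [hf0]), hdeg', by rw [← hdeg']; rfl⟩

noncomputable def pelimIdeal (I : Ideal (MvPolynomial (Fin (N + 1)) k)) (p : ℕ) :
    Ideal (MvPolynomial (Fin N) k) where
  carrier := pelimSet I p
  zero_mem' := Set.mem_insert 0 _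
  add_mem' := by
    intro _ _ ha hb
    obtain ⟨f, hf, hfdeg, rfl⟩ := mem_pelimSet_iff.1 ha
    obtain ⟨g, hg, hgdeg, rfl⟩ := mem_pelimSet_iff.1 hb
    exact mem_pelimSet_iff.2 ⟨f + g, I.add_mem hf hg, by
      simpa using Polynomial.natDegree_add_le_of_degree_le hfdeg hgdeg, by simp⟩
  smul_mem' := by
    intro c _ ha
    obtain ⟨f, hf, hfdeg, rfl⟩ := mem_pelimSet_iff.1 ha
    have hmul : finSuccEquiv k N (rename Fin.succ c * f) = Polynomial.C c * finSuccEquiv k N f :=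
      by rw [map_mul, finSuccEquiv_rename_succ]
    exact mem_pelimSet_iff.2 ⟨rename Fin.succ c * f, I.mul_mem_left _ hf,
      hmul ▸ (Polynomial.natDegree_C_mul_le _ _).trans hfdeg, by simp [hmul]⟩

theorem span_pelimSet (I : Ideal (MvPolynomial (Fin (N + 1)) k)) (p : ℕ) :
    Ideal.span (pelimSet I p) = pelimIdeal I p :=
  (pelimIdeal I p).span_eq

theorem leadingCoeff_mem_pelimSet {I : Ideal (MvPolynomial (Fin (N + 1)) k)} {p : ℕ}
    {f : MvPolynomial (Fin (N + 1)) k} (hf : f ∈ I) (hdeg : (finSuccEquiv k N f).natDegree ≤ p) :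
    (finSuccEquiv k N f).leadingCoeff ∈ pelimSet I p := by
  set q := (finSuccEquiv k N f).natDegree
  have hmul : finSuccEquiv k N (X 0 ^ (p - q) * f) = Polynomial.X ^ (p - q) * finSuccEquiv k N f :=
    by rw [map_mul, map_pow, finSuccEquiv_X_zero]
  refine mem_pelimSet_iff.2 ⟨X 0 ^ (p - q) * f, I.mul_mem_left _ hf, ?_, ?_⟩
  · rw [hmul]
    calc _ ≤ (Polynomial.X ^ (p - q)).natDegree + q := Polynomial.natDegree_mul_le
      _ ≤ p - q + q := by grw [Polynomial.natDegree_X_pow_le]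
      _ = p := Nat.sub_add_cancel hdeg
  · rw [hmul, Polynomial.coeff_X_pow_mul', if_pos (Nat.sub_le _ _), Nat.sub_sub_self hdeg]
    rfl

theorem monomial_mem_pelimSet {J : Ideal (MvPolynomial (Fin (N + 1)) k)} {p : ℕ}
    {m : Fin N →₀ ℕ} {c : k} (hm : monomial (Finsupp.cons p m) c ∈ J) :
    monomial m c ∈ pelimSet J p :=
  mem_pelimSet_iff.2 ⟨_, hm, by simpa [finSuccEquiv_monomial_cons] using
    Polynomial.natDegree_monomial_le _, by simp [finSuccEquiv_monomial_cons]⟩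

end PartialElimination

theorem stmt2_general {k : Type*} [Field k] {N : ℕ} (τ : MonomialOrder (Fin (N + 1)))
    (τ₀ : MonomialOrder (Fin N)) (helim : IsElimOrder τ) (hind : InducedOrder τ τ₀)
    (I : Ideal (MvPolynomial (Fin (N + 1)) k)) (p : ℕ) :
    Ideal.span (pelimSet (initialIdeal τ I) p) =
      initialIdeal τ₀ (Ideal.span (pelimSet I p)) := by
  apply le_antisymm
  · refine Ideal.span_le.2 fun h hh => mem_initialIdeal_iff.2 fun m hm => ?_
    obtain ⟨g, hg, -, rfl⟩ := mem_pelimSet_iff.1 hh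
    obtain ⟨f, hf, hf0, hle⟩ :=
      mem_initialIdeal_iff.1 hg _ (mem_support_coeff_finSuccEquiv.1 hm)
    rw [helim.degree_eq_cons hind hf0, Finsupp.cons_le_cons_iff] at hle
    refine ⟨_, Ideal.subset_span (leadingCoeff_mem_pelimSet hf hle.1), ?_, hle.2⟩
    simpa using hf0
  · refine Ideal.span_le.2 ?_
    rintro _ ⟨h, hh, hh0, rfl⟩
    rw [span_pelimSet] at hh
    obtain ⟨f, hf, hf0, hdeg, rfl⟩ := (Set.mem_insert_iff.1 hh).resolve_left hh0
    refine Ideal.subset_span (monomial_mem_pelimSet ?_)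
    rw [← hdeg, ldeg_eq_degree, ← helim.degree_eq_cons hind hf0]
    exact monomial_degree_mem_initialIdeal τ hf hf0

/-- Taking partial elimination ideals commutes with taking initial ideals:
`K_p(in_τ(I)) = in_{τ₀}(K_p(I))` for a homogeneous ideal `I` and an elimination order `τ`
for `x₀` inducing `τ₀`. -/
theorem stmt2 {k : Type*} [Field k] {N : ℕ} (τ : MonomialOrder (Fin (N + 1)))
    (τ₀ : MonomialOrder (Fin N)) (helim : IsElimOrder τ) (hind : InducedOrder τ τ₀)
    (I : Ideal (MvPolynomial (Fin (N + 1)) k)) (hI : IsHomogeneousIdeal I) (p : ℕ) :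
    Ideal.span (pelimSet (initialIdeal τ I) p) =
      initialIdeal τ₀ (Ideal.span (pelimSet I p)) :=
  stmt2_general τ τ₀ helim hind I p
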